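/- Let {ε_n}_{n≥1} be a strictly decreasing sequence in (0,1) with ε_n → 0 such that {1 - ε_n} is a thin Blaschke sequence (lim_{m→∞} ∏_{n ≠ m} d(1 - ε_n, 1 - ε_m) = 1), and let B(z) = ∏_{n=1}^∞ ((1 - ε_n) - z)/(1 - (1 - ε_n)·z) be the Blaschke product with zeros 1 - ε_n. Then for every real θ₁ with 0 < |θ₁| < π/2, liminf_{m→∞} |B(1 - ε_m·e^{iθ₁})| > 0. -/

import Mathlib

/-!
For real zeros `x_n = 1 - ε_n` one has `|B z| = ∏ d(x_n, z)`. Thinness bounds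
`∑_{n ≠ m} (1 - d(x_n, x_m)²) ≤ -2 log ∏_{n ≠ m} d(x_n, x_m) → 0`, and since
`1 - d(x_n, x_m)² ≥ ε_n ε_m` it also gives `∑ ε_n < ∞`. An explicit computation shows that at
`z_m = 1 - ε_m e^{iθ}` one has `cos θ · (1 - d(x_n, z_m)²) ≤ 1 - d(x_n, x_m)²`, so for large `m`
the factors with `n ≠ m` have product at least `3/4`, while the remaining factor is
`d(x_m, z_m) = |1 - e^{iθ}| / |1 + (1 - ε_m) e^{iθ}| ≥ |1 - e^{iθ}| / 2`.
-/

open Complex Filter Metric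

/-- The pseudohyperbolic distance `d(z,w) = |z - w| / |1 - conj z * w|` on the unit disk. -/
noncomputable def pd (z w : ℂ) : ℝ :=
  ‖z - w‖ / ‖1 - (starRingEnd ℂ) z * w‖

/-- The Blaschke product with zeros `1 - ε_n ∈ (0,1)`:
`B(z) = ∏_{n=1}^∞ ((1 - ε_n) - z)/(1 - (1 - ε_n) z)`. -/
noncomputable def B (ε : ℕ → ℝ) (z : ℂ) : ℂ :=
  ∏' n : ℕ, (((1 - ε n : ℝ) : ℂ) - z) / (1 - ((1 - ε n : ℝ) : ℂ) * z)

section UnitIntervalProducts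

variable {ι : Type*} {f : ι → ℝ}

lemma hasProd_iInf_of_nonneg_of_le_one (h0 : ∀ i, 0 ≤ f i) (h1 : ∀ i, f i ≤ 1) :
    HasProd f (⨅ s : Finset ι, ∏ i ∈ s, f i) :=
  tendsto_atTop_ciInf (Finset.prod_anti_set_of_le_one h0 h1)
    ⟨0, Set.forall_mem_range.2 fun _ => Finset.prod_nonneg fun i _ => h0 i⟩

lemma tprod_le_prod_of_nonneg_of_le_one (h0 : ∀ i, 0 ≤ f i) (h1 : ∀ i, f i ≤ 1)
    (s : Finset ι) : ∏' i, f i ≤ ∏ i ∈ s, f i := by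
  rw [(hasProd_iInf_of_nonneg_of_le_one h0 h1).tprod_eq]
  exact ciInf_le ⟨0, Set.forall_mem_range.2 fun _ => Finset.prod_nonneg fun i _ => h0 i⟩ s

lemma le_tprod_of_nonneg_of_le_one (h0 : ∀ i, 0 ≤ f i) (h1 : ∀ i, f i ≤ 1) {δ : ℝ}
    (h : ∀ s : Finset ι, δ ≤ ∏ i ∈ s, f i) : δ ≤ ∏' i, f i := by
  rw [(hasProd_iInf_of_nonneg_of_le_one h0 h1).tprod_eq]
  exact le_ciInf h

lemma tprod_le_one_of_nonneg_of_le_one (h0 : ∀ i, 0 ≤ f i) (h1 : ∀ i, f i ≤ 1) :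
    ∏' i, f i ≤ 1 := by
  simpa using tprod_le_prod_of_nonneg_of_le_one h0 h1 ∅

lemma tprod_ne_le_prod_of_nonneg_of_le_one (h0 : ∀ i, 0 ≤ f i) (h1 : ∀ i, f i ≤ 1) {a : ι}
    {s : Finset ι} (ha : a ∉ s) : ∏' i : {i // i ≠ a}, f i ≤ ∏ i ∈ s, f i := by
  classical
  calc ∏' i : {i // i ≠ a}, f i ≤ ∏ i ∈ s.subtype (· ≠ a), f i :=
        tprod_le_prod_of_nonneg_of_le_one (f := fun i : {i // i ≠ a} => f i) (fun i => h0 i)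
          (fun i => h1 i) _
    _ = ∏ i ∈ s, f i := Finset.prod_subtype_of_mem f fun _ hi => ne_of_mem_of_not_mem hi ha

lemma sum_one_sub_le_neg_log_prod {s : Finset ι} (h : ∀ i ∈ s, 0 < f i) :
    ∑ i ∈ s, (1 - f i) ≤ -Real.log (∏ i ∈ s, f i) := by
  rw [Real.log_prod fun i hi => (h i hi).ne', ← Finset.sum_neg_distrib]
  exact Finset.sum_le_sum fun i hi => by linarith [Real.log_le_sub_one_of_pos (h i hi)]

lemma one_sub_sum_le_prod {s : Finset ι} {u : ι → ℝ} (h0 : ∀ i ∈ s, 0 ≤ f i)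
    (h1 : ∀ i ∈ s, f i ≤ 1) (hu : ∀ i ∈ s, 1 - u i ≤ f i) :
    1 - ∑ i ∈ s, u i ≤ ∏ i ∈ s, f i := by
  induction s using Finset.cons_induction with
  | empty => simp
  | cons a s ha ih =>
    simp only [Finset.mem_cons, forall_eq_or_imp] at h0 h1 hu
    rw [Finset.prod_cons, Finset.sum_cons]
    have hP := ih h0.2 h1.2 hu.2
    have hP1 : ∏ i ∈ s, f i ≤ 1 := Finset.prod_le_one h0.2 h1.2
    nlinarith [mul_le_mul_of_nonneg_right h1.1 (sub_nonneg.2 hP1)]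

end UnitIntervalProducts

open ComplexConjugate

lemma pd_nonneg (z w : ℂ) : 0 ≤ pd z w := by
  unfold pd; positivity

lemma normSq_one_sub_conj_mul_sub_normSq_sub (z w : ℂ) :
    normSq (1 - conj z * w) - normSq (z - w) = (1 - normSq z) * (1 - normSq w) := by
  simp only [normSq_apply, sub_re, sub_im, mul_re, mul_im, conj_re, conj_im, one_re, one_im]
  ring

lemma pd_le_one {z w : ℂ} (hz : ‖z‖ ≤ 1) (hw : ‖w‖ ≤ 1) : pd z w ≤ 1 := by
  have hsq : ‖z - w‖ ^ 2 ≤ ‖1 - conj z * w‖ ^ 2 := by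
    rw [Complex.sq_norm, Complex.sq_norm, ← sub_nonneg, normSq_one_sub_conj_mul_sub_normSq_sub,
      ← Complex.sq_norm, ← Complex.sq_norm]
    exact mul_nonneg (by nlinarith [norm_nonneg z]) (by nlinarith [norm_nonneg w])
  exact div_le_one_of_le₀
    ((pow_le_pow_iff_left₀ (norm_nonneg _) (norm_nonneg _) two_ne_zero).1 hsq) (norm_nonneg _)

lemma exp_I_mul_ofReal_eq (θ : ℝ) : exp (I * θ) = Real.cos θ + Real.sin θ * I := by
  rw [mul_comm, exp_mul_I, ← ofReal_cos, ← ofReal_sin]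

lemma exp_I_mul_ofReal_ne_one {θ : ℝ} (h0 : θ ≠ 0) (hθ : |θ| < 2 * Real.pi) :
    exp (I * θ) ≠ 1 := by
  intro h
  have hsin : Real.sin (θ / 2) = 0 := by
    simpa [h] using (norm_exp_I_mul_ofReal_sub_one θ).symm
  obtain ⟨hl, hr⟩ := abs_lt.1 hθ
  have := (Real.sin_eq_zero_iff_of_lt_of_lt (by linarith) (by linarith)).1 hsin
  exact h0 (by linarith)

lemma pd_sq_one_sub_one_sub_mul_exp (a b θ : ℝ) :
    pd (1 - a) (1 - b * exp (I * θ)) ^ 2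
      = (a ^ 2 - 2 * a * b * Real.cos θ + b ^ 2)
        / (a ^ 2 + 2 * a * (1 - a) * b * Real.cos θ + (1 - a) ^ 2 * b ^ 2) := by
  rw [pd, div_pow, Complex.sq_norm, Complex.sq_norm, exp_I_mul_ofReal_eq]
  simp only [normSq_apply, sub_re, sub_im, mul_re, mul_im, conj_re, conj_im, one_re, one_im,
    ofReal_re, ofReal_im, add_re, add_im, I_re, I_im]
  congr 1
  · linear_combination b ^ 2 * Real.sin_sq_add_cos_sq θ
  · linear_combination (1 - a) ^ 2 * b ^ 2 * Real.sin_sq_add_cos_sq θ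

section RealZeros

variable {a b θ : ℝ}

lemma one_sub_pd_sq_one_sub_one_sub_mul_exp (ha : 0 < a) (ha1 : a ≤ 1) (hb : 0 ≤ b)
    (hθ : 0 ≤ Real.cos θ) :
    1 - pd (1 - a) (1 - b * exp (I * θ)) ^ 2
      = a * (2 - a) * (b * (2 * Real.cos θ - b))
        / (a ^ 2 + 2 * a * (1 - a) * b * Real.cos θ + (1 - a) ^ 2 * b ^ 2) := by
  have hD : 0 < a ^ 2 + 2 * a * (1 - a) * b * Real.cos θ + (1 - a) ^ 2 * b ^ 2 := by
    have : 0 ≤ 1 - a := sub_nonneg.2 ha1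
    positivity
  rw [pd_sq_one_sub_one_sub_mul_exp, one_sub_div hD.ne']
  ring

lemma one_sub_pd_sq_one_sub_one_sub (ha : 0 < a) (ha1 : a ≤ 1) (hb : 0 ≤ b) :
    1 - pd (1 - a) (1 - b) ^ 2 = a * (2 - a) * (b * (2 - b)) / (a + (1 - a) * b) ^ 2 := by
  have h := one_sub_pd_sq_one_sub_one_sub_mul_exp (θ := 0) ha ha1 hb (by simp)
  simp only [ofReal_zero, mul_zero, exp_zero, mul_one, Real.cos_zero] at h
  rw [h]
  ring

lemma cos_mul_one_sub_pd_sq_le (ha : 0 < a) (ha1 : a ≤ 1) (hb : 0 ≤ b) (hb2 : b ≤ 2)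
    (hθ : 0 ≤ Real.cos θ) :
    Real.cos θ * (1 - pd (1 - a) (1 - b * exp (I * θ)) ^ 2) ≤ 1 - pd (1 - a) (1 - b) ^ 2 := by
  set c := Real.cos θ
  have hc1 : c ≤ 1 := Real.cos_le_one θ
  have hS : 0 < (a + (1 - a) * b) ^ 2 := by
    have : 0 ≤ 1 - a := sub_nonneg.2 ha1
    positivity
  have hD : 0 < a ^ 2 + 2 * a * (1 - a) * b * c + (1 - a) ^ 2 * b ^ 2 := by
    have : 0 ≤ 1 - a := sub_nonneg.2 ha1
    positivity
  rw [one_sub_pd_sq_one_sub_one_sub_mul_exp ha ha1 hb hθ, one_sub_pd_sq_one_sub_one_sub ha ha1 hb,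
    mul_div_assoc', div_le_div_iff₀ hD hS, ← sub_nonneg]
  have h : 0 ≤ (2 - b) * (1 - c) * (a ^ 2 + (1 - a) ^ 2 * b ^ 2)
      + 2 * c * (1 - c) * (a + (1 - a) * b) ^ 2 := by
    have : 0 ≤ 2 - b := sub_nonneg.2 hb2
    have : 0 ≤ 1 - c := sub_nonneg.2 hc1
    positivity
  have : 0 ≤ 2 - a := by linarith
  -- the cross-multiplied difference is `a (2 - a) b` times the expression in `h`
  convert mul_nonneg (mul_nonneg (mul_nonneg ha.le this) hb) h using 1
  ring

lemma mul_le_one_sub_pd_sq (ha : 0 < a) (ha1 : a ≤ 1) (hb : 0 ≤ b) (hb1 : b ≤ 1) :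
    a * b ≤ 1 - pd (1 - a) (1 - b) ^ 2 := by
  have h1a : 0 ≤ 1 - a := sub_nonneg.2 ha1
  have hS : 0 < (a + (1 - a) * b) ^ 2 := by positivity
  have hS1 : (a + (1 - a) * b) ^ 2 ≤ 1 := pow_le_one₀ (by positivity) (by nlinarith)
  rw [one_sub_pd_sq_one_sub_one_sub ha ha1 hb, le_div_iff₀ hS]
  calc a * b * (a + (1 - a) * b) ^ 2 ≤ a * b := mul_le_of_le_one_right (by positivity) hS1
    _ ≤ a * (2 - a) * (b * (2 - b)) := by
      nlinarith [mul_nonneg ha.le hb, mul_nonneg h1a (sub_nonneg.2 hb1)]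

lemma norm_one_sub_div_two_le_pd {e : ℂ} (he : ‖e‖ ≤ 1) (hb : 0 < b) (hb1 : b ≤ 1) :
    ‖1 - e‖ / 2 ≤ pd (1 - b) (1 - b * e) := by
  have hden : 1 - conj (1 - (b : ℂ)) * (1 - b * e) = b * (1 + (1 - b) * e) := by
    simp only [map_sub, map_one, conj_ofReal]
    ring
  have hnum : 1 - (b : ℂ) - (1 - b * e) = b * -(1 - e) := by ring
  have hb' : 0 < ‖(b : ℂ)‖ := by simpa using hb.ne'
  have hfac : ‖(1 - b : ℂ) * e‖ ≤ 1 - b := by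
    rw [norm_mul, ← ofReal_one, ← ofReal_sub, norm_real, Real.norm_of_nonneg (by linarith)]
    exact mul_le_of_le_one_right (by linarith) he
  have hlow : 0 < ‖1 + (1 - b) * e‖ := by
    have := norm_sub_norm_le (1 : ℂ) (-((1 - b) * e))
    rw [norm_neg, norm_one, sub_neg_eq_add] at this
    linarith
  have hup : ‖1 + (1 - b) * e‖ ≤ 2 := by
    have := norm_add_le (1 : ℂ) ((1 - b) * e)
    rw [norm_one] at this
    linarith
  rw [pd, hden, hnum, norm_mul, norm_mul, norm_neg, mul_div_mul_left _ _ hb'.ne']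
  exact div_le_div_of_nonneg_left (norm_nonneg _) hlow hup

lemma norm_one_sub_mul_exp_lt_one (hb : 0 < b) (hb2 : b < 2 * Real.cos θ) :
    ‖1 - b * exp (I * θ)‖ < 1 := by
  have hsq : ‖1 - b * exp (I * θ)‖ ^ 2 = 1 - b * (2 * Real.cos θ - b) := by
    rw [Complex.sq_norm, exp_I_mul_ofReal_eq]
    simp only [normSq_apply, sub_re, sub_im, mul_re, mul_im, one_re, one_im,
      ofReal_re, ofReal_im, add_re, add_im, I_re, I_im]
    linear_combination b ^ 2 * Real.sin_sq_add_cos_sq θ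
  have : ‖1 - b * exp (I * θ)‖ ^ 2 < 1 := by rw [hsq]; nlinarith
  exact (pow_lt_one_iff_of_nonneg (norm_nonneg _) two_ne_zero).1 this

end RealZeros

lemma norm_B_eq_tprod_pd {ε : ℕ → ℝ} (hε : Summable ε) (hx : ∀ n, ‖1 - (ε n : ℂ)‖ ≤ 1) {z : ℂ}
    (hz : ‖z‖ < 1) : ‖B ε z‖ = ∏' n, pd (1 - ε n) z := by
  set b : ℕ → ℂ := fun n => (((1 - ε n : ℝ) : ℂ) - z) / (1 - ((1 - ε n : ℝ) : ℂ) * z)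
  have hden : ∀ n, 1 - ‖z‖ ≤ ‖1 - ((1 - ε n : ℝ) : ℂ) * z‖ := fun n => by
    have := norm_sub_norm_le (1 : ℂ) (((1 - ε n : ℝ) : ℂ) * z)
    have hxn : ‖((1 - ε n : ℝ) : ℂ)‖ ≤ 1 := by push_cast; exact hx n
    rw [norm_one, norm_mul] at this
    nlinarith [norm_nonneg z]
  have hb : ∀ n, ‖b n - 1‖ ≤ 2 / (1 - ‖z‖) * ‖ε n‖ := fun n => by
    have hpos : 0 < ‖1 - ((1 - ε n : ℝ) : ℂ) * z‖ := by linarith [hden n]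
    have : b n - 1 = -(ε n : ℂ) * (1 + z) / (1 - ((1 - ε n : ℝ) : ℂ) * z) := by
      rw [div_sub_one (norm_pos_iff.1 hpos)]
      push_cast
      ring
    rw [this, norm_div, norm_mul, norm_neg, norm_real]
    have h2 : ‖1 + z‖ ≤ 2 := by linarith [norm_add_le 1 z, norm_one (α := ℂ)]
    calc ‖ε n‖ * ‖1 + z‖ / ‖1 - ((1 - ε n : ℝ) : ℂ) * z‖ ≤ ‖ε n‖ * 2 / (1 - ‖z‖) :=
          div_le_div₀ (by positivity) (by gcongr) (by linarith) (hden n)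
      _ = 2 / (1 - ‖z‖) * ‖ε n‖ := by ring
  have hmul : Multipliable b := by
    simpa using Complex.multipliable_one_add_of_summable
      (Summable.of_norm_bounded (hε.norm.mul_left _) hb)
  rw [B, hmul.norm_tprod]
  refine tprod_congr fun n => ?_
  rw [norm_div, pd]
  congr 2
  · push_cast; ring
  · simp

section ThinSequence

variable {ε : ℕ → ℝ}

lemma norm_one_sub_le_one (hε : ∀ n, ε n ∈ Set.Ioo (0 : ℝ) 1) (n : ℕ) : ‖1 - (ε n : ℂ)‖ ≤ 1 := by
  rw [← ofReal_one, ← ofReal_sub, norm_real, Real.norm_eq_abs, abs_le]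
  constructor <;> linarith [(hε n).1, (hε n).2]

lemma sum_one_sub_pd_sq_le_neg_two_mul_log (hε : ∀ n, ε n ∈ Set.Ioo (0 : ℝ) 1) {m : ℕ} {q : ℝ}
    (hq : 0 < q) (hqP : q ≤ ∏' n : {n : ℕ // n ≠ m}, pd (1 - ε n) (1 - ε m)) {s : Finset ℕ}
    (hm : m ∉ s) :
    ∑ n ∈ s, (1 - pd (1 - ε n) (1 - ε m) ^ 2) ≤ -2 * Real.log q := by
  set t : ℕ → ℝ := fun n => pd (1 - ε n) (1 - ε m)
  have hP : q ≤ ∏ n ∈ s, t n := hqP.trans <| tprod_ne_le_prod_of_nonneg_of_le_one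
    (fun n => pd_nonneg _ _)
    (fun n => pd_le_one (norm_one_sub_le_one hε n) (norm_one_sub_le_one hε m)) hm
  have hP2 : q ^ 2 ≤ ∏ n ∈ s, t n ^ 2 := by
    rw [Finset.prod_pow]
    exact pow_le_pow_left₀ hq.le hP 2
  have hpos : 0 < ∏ n ∈ s, t n ^ 2 := (pow_pos hq 2).trans_le hP2
  have ht : ∀ n ∈ s, 0 < t n ^ 2 := fun n hn =>
    (sq_nonneg _).lt_of_ne' (Finset.prod_ne_zero_iff.1 hpos.ne' n hn)
  calc ∑ n ∈ s, (1 - t n ^ 2) ≤ -Real.log (∏ n ∈ s, t n ^ 2) := sum_one_sub_le_neg_log_prod ht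
    _ ≤ -Real.log (q ^ 2) := neg_le_neg (Real.log_le_log (pow_pos hq 2) hP2)
    _ = -2 * Real.log q := by rw [Real.log_pow]; push_cast; ring

lemma eventually_sum_one_sub_pd_sq_le (hε : ∀ n, ε n ∈ Set.Ioo (0 : ℝ) 1)
    (hthin : Tendsto (fun m : ℕ => ∏' n : {n : ℕ // n ≠ m}, pd (1 - ε n) (1 - ε m)) atTop (nhds 1))
    {η : ℝ} (hη : 0 < η) :
    ∀ᶠ m in atTop, ∀ s : Finset ℕ, m ∉ s → ∑ n ∈ s, (1 - pd (1 - ε n) (1 - ε m) ^ 2) ≤ η := by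
  have hq : Real.exp (-(η / 2)) < 1 := Real.exp_lt_one_iff.2 (by linarith)
  filter_upwards [hthin.eventually (eventually_ge_nhds hq)] with m hm s hs
  have := sum_one_sub_pd_sq_le_neg_two_mul_log hε (Real.exp_pos _) hm hs
  rwa [Real.log_exp, mul_neg, neg_mul, neg_neg, mul_div_cancel₀ _ two_ne_zero] at this

lemma summable_of_thin (hε : ∀ n, ε n ∈ Set.Ioo (0 : ℝ) 1)
    (hthin : Tendsto (fun m : ℕ => ∏' n : {n : ℕ // n ≠ m}, pd (1 - ε n) (1 - ε m)) atTop
      (nhds 1)) :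
    Summable ε := by
  obtain ⟨m, hm⟩ := (eventually_sum_one_sub_pd_sq_le hε hthin one_pos).exists
  have hεm := hε m
  refine summable_of_sum_le (c := ε m + 1 / ε m) (fun n => (hε n).1.le) fun s => ?_
  have hrest : (∑ n ∈ s.erase m, ε n) * ε m ≤ 1 := by
    rw [Finset.sum_mul]
    refine (Finset.sum_le_sum fun n _ => ?_).trans (hm _ (Finset.notMem_erase m s))
    exact mul_le_one_sub_pd_sq (hε n).1 (hε n).2.le hεm.1.le hεm.2.le
  calc ∑ n ∈ s, ε n ≤ ∑ n ∈ insert m (s.erase m), ε n :=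
        Finset.sum_le_sum_of_subset_of_nonneg (Finset.insert_erase_subset m s)
          fun n _ _ => (hε n).1.le
    _ = ε m + ∑ n ∈ s.erase m, ε n := Finset.sum_insert (Finset.notMem_erase m s)
    _ ≤ ε m + 1 / ε m := add_le_add_right ((le_div_iff₀ hεm.1).2 hrest) _

lemma le_tprod_pd_one_sub_mul_exp (hε : ∀ n, ε n ∈ Set.Ioo (0 : ℝ) 1) {θ : ℝ} {m : ℕ}
    (hm : ε m < Real.cos θ)
    (hsum : ∀ s : Finset ℕ, m ∉ s → ∑ n ∈ s, (1 - pd (1 - ε n) (1 - ε m) ^ 2) ≤ Real.cos θ / 4) :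
    3 / 8 * ‖1 - exp (I * θ)‖ ≤ ∏' n, pd (1 - ε n) (1 - ε m * exp (I * θ)) := by
  set c := Real.cos θ
  set z := 1 - ε m * exp (I * θ)
  have hc : 0 < c := (hε m).1.trans hm
  have hz : ‖z‖ < 1 := norm_one_sub_mul_exp_lt_one (hε m).1 (by linarith [(hε m).1])
  have hs0 : ∀ n, 0 ≤ pd (1 - ε n) z := fun n => pd_nonneg _ _
  have hs1 : ∀ n, pd (1 - ε n) z ≤ 1 := fun n => pd_le_one (norm_one_sub_le_one hε n) hz.le
  have hcmp : ∀ n, 1 - (1 - pd (1 - ε n) (1 - ε m) ^ 2) / c ≤ pd (1 - ε n) z := fun n => by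
    have h : c * (1 - pd (1 - ε n) z ^ 2) ≤ 1 - pd (1 - ε n) (1 - ε m) ^ 2 :=
      cos_mul_one_sub_pd_sq_le (hε n).1 (hε n).2.le (hε m).1.le (by linarith [(hε m).2]) hc.le
    have h' : 1 - pd (1 - ε n) z ^ 2 ≤ (1 - pd (1 - ε n) (1 - ε m) ^ 2) / c :=
      (le_div_iff₀ hc).2 (by linarith)
    nlinarith [hs0 n, hs1 n]
  have hrest : ∀ s : Finset ℕ, 3 / 4 ≤ ∏ n ∈ s.erase m, pd (1 - ε n) z := fun s => by
    have h := one_sub_sum_le_prod (s := s.erase m) (fun n _ => hs0 n) (fun n _ => hs1 n)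
      fun n _ => hcmp n
    have hu : (∑ n ∈ s.erase m, (1 - pd (1 - ε n) (1 - ε m) ^ 2)) / c ≤ 1 / 4 := by
      rw [div_le_iff₀ hc]
      linarith [hsum _ (Finset.notMem_erase m s)]
    rw [← Finset.sum_div] at h
    linarith
  have hm' : ‖1 - exp (I * θ)‖ / 2 ≤ pd (1 - ε m) z :=
    norm_one_sub_div_two_le_pd (norm_exp_I_mul_ofReal θ).le (hε m).1 (hε m).2.le
  have h2 : ‖1 - exp (I * θ)‖ ≤ 2 := by
    linarith [norm_sub_le (1 : ℂ) (exp (I * θ)), norm_exp_I_mul_ofReal θ, norm_one (α := ℂ)]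
  refine le_tprod_of_nonneg_of_le_one hs0 hs1 fun s => ?_
  by_cases hms : m ∈ s
  · rw [← Finset.mul_prod_erase s _ hms]
    calc 3 / 8 * ‖1 - exp (I * θ)‖ = ‖1 - exp (I * θ)‖ / 2 * (3 / 4) := by ring
      _ ≤ _ := mul_le_mul hm' (hrest s) (by norm_num) (hs0 m)
  · rw [← Finset.erase_eq_of_notMem hms]
    linarith [hrest s]

end ThinSequence

theorem stmt9_general (ε : ℕ → ℝ) (hmem : ∀ n, ε n ∈ Set.Ioo (0 : ℝ) 1)
    (hthin : Tendsto (fun m : ℕ =>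
      ∏' n : {n : ℕ // n ≠ m}, pd (1 - (ε (n : ℕ) : ℂ)) (1 - (ε m : ℂ))) atTop (nhds 1))
    (θ₁ : ℝ) (h1 : 0 < |θ₁|) (h2 : |θ₁| < Real.pi / 2) :
    0 < Filter.liminf (fun m : ℕ =>
      ‖B ε (1 - (ε m : ℂ) * Complex.exp (Complex.I * θ₁))‖) atTop := by
  have hc : 0 < Real.cos θ₁ := Real.cos_pos_of_mem_Ioo (abs_lt.1 h2)
  have hsum : Summable ε := summable_of_thin hmem hthin
  have hδ : 0 < 3 / 8 * ‖1 - exp (I * θ₁)‖ := by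
    have := exp_I_mul_ofReal_ne_one (abs_pos.1 h1) (by linarith [Real.pi_pos])
    have := norm_pos_iff.2 (sub_ne_zero.2 this.symm)
    positivity
  have hB : ∀ᶠ m in atTop, 3 / 8 * ‖1 - exp (I * θ₁)‖ ≤ ‖B ε (1 - ε m * exp (I * θ₁))‖
      ∧ ‖B ε (1 - ε m * exp (I * θ₁))‖ ≤ 1 := by
    filter_upwards
      [eventually_sum_one_sub_pd_sq_le hmem hthin (by positivity : 0 < Real.cos θ₁ / 4),
      hsum.tendsto_atTop_zero.eventually (gt_mem_nhds hc)] with m hthin_m hεm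
    have hz := norm_one_sub_mul_exp_lt_one (hmem m).1 (by linarith [(hmem m).1])
    rw [norm_B_eq_tprod_pd hsum (norm_one_sub_le_one hmem) hz]
    exact ⟨le_tprod_pd_one_sub_mul_exp hmem hεm hthin_m, tprod_le_one_of_nonneg_of_le_one
      (fun n => pd_nonneg _ _) fun n => pd_le_one (norm_one_sub_le_one hmem n) hz.le⟩
  exact hδ.trans_le <| le_liminf_of_le
    (isCoboundedUnder_ge_of_eventually_le atTop (hB.mono fun _ h => h.2)) (hB.mono fun _ h => h.1)

/-- If `ε_n` decreases strictly to `0` in `(0,1)`, `{1 - ε_n}` is a thin Blaschke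
sequence, and `B` is the Blaschke product with zeros `1 - ε_n`, then for every `θ₁`
with `0 < |θ₁| < π/2`, `liminf_{m→∞} |B(1 - ε_m e^{iθ₁})| > 0`. -/
theorem stmt9 (ε : ℕ → ℝ) (hdec : StrictAnti ε) (hmem : ∀ n, ε n ∈ Set.Ioo (0 : ℝ) 1)
    (hlim : Tendsto ε atTop (nhds 0))
    (hthin : Tendsto (fun m : ℕ =>
      ∏' n : {n : ℕ // n ≠ m}, pd (1 - (ε (n : ℕ) : ℂ)) (1 - (ε m : ℂ))) atTop (nhds 1))
    (θ₁ : ℝ) (h1 : 0 < |θ₁|) (h2 : |θ₁| < Real.pi / 2) :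
    0 < Filter.liminf (fun m : ℕ =>
      ‖B ε (1 - (ε m : ℂ) * Complex.exp (Complex.I * θ₁))‖) atTop :=
  stmt9_general ε hmem hthin θ₁ h1 h2
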